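/- Consider the regression y_t = x_t'β + ε_t for t = 1,…,n, where ε_t are i.i.d. mean-zero with variance σ², the regressors satisfy x_t = (1, x̃_t') with (1/n)Σ_{t=1}^{⌊nr⌋} x_t → (r,0,…,0) and (1/n)Σ x_t x_t' → Q block-diagonal and invertible, and β̂_n is the OLS estimator with √n(β̂_n − β) = O_p(1). Then uniformly in r ∈ [0,1], (1/√n)Σ_{t=1}^{⌊nr⌋} x_t'(β̂_n − β) = (r/√n)Σ_{t=1}^{n} ε_t + o_p(1). -/

import Mathlib

/-!
The OLS normal equation of the intercept says that the residuals sum to zero, i.e.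
`Σ_{t<n} ε_t = Σ_{t<n} x_t'(β̂_n − β)`. The difference in the theorem then equals
`Σ_j D_j(n, r) (β̂_{n,j} − β_j)`, where `D_j(n, r) = cusumDeviation (x · j) n r = Σ_{t<⌊nr⌋} x_{tj} − r Σ_{t<n} x_{tj}`.
Cesàro convergence of every regressor makes `D_j(n, r) = o(n)` uniformly in `r ∈ [0, 1]`, and
therefore the difference divided by `√n` is `o(1) · √n ‖β̂_n − β‖ = o(1) · O_p(1)`.
-/

open MeasureTheory ProbabilityTheory Filter Finset

noncomputable def cusumDeviation (a : ℕ → ℝ) (n : ℕ) (r : ℝ) : ℝ :=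
  ∑ t ∈ range ⌊(n : ℝ) * r⌋₊, a t - r * ∑ t ∈ range n, a t

lemma eventually_forall_le_abs_le_mul_of_tendsto_div_zero (s : ℕ → ℝ)
    (hs : Tendsto (fun n : ℕ => s n / n) atTop (nhds 0)) {e : ℝ} (he : 0 < e) :
    ∀ᶠ n : ℕ in atTop, ∀ m ≤ n, |s m| ≤ e * n := by
  obtain ⟨N, hN⟩ := eventually_atTop.1 <|
    (hs.abs.eventually (gt_mem_nhds (by simpa using he))).and (eventually_gt_atTop 0)
  have hC : ∀ᶠ n : ℕ in atTop, ∑ m ∈ range N, |s m| ≤ e * n :=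
    (tendsto_natCast_atTop_atTop.const_mul_atTop he).eventually_ge_atTop _
  filter_upwards [hC] with n hn m hm
  rcases lt_or_ge m N with hmN | hmN
  · exact (single_le_sum (fun i _ => abs_nonneg (s i)) (mem_range.2 hmN)).trans hn
  · obtain ⟨hsm, hm0⟩ := hN m hmN
    have hm0' : (0 : ℝ) < m := Nat.cast_pos.2 hm0
    rw [abs_div, Nat.abs_cast, div_lt_iff₀ hm0'] at hsm
    exact hsm.le.trans (by gcongr)

lemma eventually_forall_abs_cusumDeviation_le_of_tendsto_zero (a : ℕ → ℝ)
    (ha : Tendsto (fun n : ℕ => (∑ t ∈ range n, a t) / n) atTop (nhds 0)) {e : ℝ} (he : 0 < e) :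
    ∀ᶠ n : ℕ in atTop, ∀ r ∈ Set.Icc (0 : ℝ) 1, |cusumDeviation a n r| ≤ e * n := by
  filter_upwards [eventually_forall_le_abs_le_mul_of_tendsto_div_zero _ ha (half_pos he)]
    with n hn r hr
  have hfloor : ⌊(n : ℝ) * r⌋₊ ≤ n :=
    Nat.floor_le_of_le (mul_le_of_le_one_right n.cast_nonneg hr.2)
  have hr_abs : |r| ≤ 1 := abs_le.2 ⟨by linarith [hr.1], hr.2⟩
  calc |cusumDeviation a n r|
      ≤ |∑ t ∈ range ⌊(n : ℝ) * r⌋₊, a t| + |r| * |∑ t ∈ range n, a t| := by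
        rw [cusumDeviation, ← abs_mul]; exact abs_sub _ _
    _ ≤ e / 2 * n + 1 * (e / 2 * n) := by
        gcongr
        exacts [hn _ hfloor, hn n le_rfl]
    _ = e * n := by ring

lemma abs_cusumDeviation_one_le (n : ℕ) {r : ℝ} (hr : 0 ≤ r) :
    |cusumDeviation (fun _ => 1) n r| ≤ 1 := by
  have hnr : 0 ≤ (n : ℝ) * r := mul_nonneg n.cast_nonneg hr
  have h₁ := Nat.floor_le hnr
  have h₂ := Nat.lt_floor_add_one ((n : ℝ) * r)
  simp only [cusumDeviation, sum_const, card_range, nsmul_eq_mul, mul_one]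
  rw [abs_le]
  constructor <;> linarith

lemma cusumDeviation_eq_sub_add_const_mul (a : ℕ → ℝ) (c : ℝ) (n : ℕ) (r : ℝ) :
    cusumDeviation a n r =
      cusumDeviation (fun t => a t - c) n r + c * cusumDeviation (fun _ => 1) n r := by
  simp only [cusumDeviation, sum_sub_distrib, sum_const, card_range, nsmul_eq_mul, mul_one]
  ring

lemma eventually_forall_abs_cusumDeviation_le (a : ℕ → ℝ) {c : ℝ}
    (ha : Tendsto (fun n : ℕ => (∑ t ∈ range n, a t) / n) atTop (nhds c)) {e : ℝ} (he : 0 < e) :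
    ∀ᶠ n : ℕ in atTop, ∀ r ∈ Set.Icc (0 : ℝ) 1, |cusumDeviation a n r| ≤ e * n := by
  have hcentred : Tendsto (fun n : ℕ => (∑ t ∈ range n, (a t - c)) / n) atTop (nhds 0) := by
    refine (sub_self c ▸ ha.sub_const c).congr' ?_
    filter_upwards [eventually_gt_atTop 0] with n hn
    rw [sum_sub_distrib, sum_const, card_range, nsmul_eq_mul, sub_div,
      mul_div_cancel_left₀ _ (Nat.cast_ne_zero.2 hn.ne')]
  have hconst : ∀ᶠ n : ℕ in atTop, |c| ≤ e / 2 * n :=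
    (tendsto_natCast_atTop_atTop.const_mul_atTop (half_pos he)).eventually_ge_atTop _
  filter_upwards [eventually_forall_abs_cusumDeviation_le_of_tendsto_zero _ hcentred
    (half_pos he), hconst] with n hn hc r hr
  calc |cusumDeviation a n r|
      ≤ |cusumDeviation (fun t => a t - c) n r| + |c| * |cusumDeviation (fun _ => 1) n r| := by
        rw [cusumDeviation_eq_sub_add_const_mul a c, ← abs_mul]; exact abs_add_le _ _
    _ ≤ e / 2 * n + e / 2 * n * 1 := by
        gcongr
        exacts [hn r hr, abs_cusumDeviation_one_le n hr.1]
    _ = e * n := by ring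

section Regression

variable {ι : Type*} [Fintype ι] (x : ℕ → ι → ℝ)

lemma sum_innovation_eq_sum_fitted_error {i₀ : ι} (hconst : ∀ t, x t i₀ = 1)
    {y ε : ℕ → ℝ} {β b : ι → ℝ} (hy : ∀ t, y t = ∑ j, x t j * β j + ε t) {n : ℕ}
    (hnormal : ∑ t ∈ range n, x t i₀ * (y t - ∑ j, x t j * b j) = 0) :
    ∑ t ∈ range n, ε t = ∑ t ∈ range n, ∑ j, x t j * (b j - β j) := by
  rw [← sub_eq_zero, ← sum_sub_distrib, ← hnormal]
  refine sum_congr rfl fun t _ => ?_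
  simp only [hconst, hy, one_mul, mul_sub, sum_sub_distrib]
  ring

lemma cusum_fitted_error_sub_eq_sum_cusumDeviation (b β : ι → ℝ) (n : ℕ) (r : ℝ) :
    ∑ t ∈ range ⌊(n : ℝ) * r⌋₊, ∑ j, x t j * (b j - β j)
        - r * ∑ t ∈ range n, ∑ j, x t j * (b j - β j) =
      ∑ j, cusumDeviation (x · j) n r * (b j - β j) := by
  simp only [cusumDeviation, sub_mul, sum_sub_distrib, sum_mul, mul_sum, mul_assoc]
  rw [sum_comm, sum_comm (s := range n)]

end Regression

lemma abs_sum_mul_sub_le_card_mul {ι : Type*} [Fintype ι] (D b β : ι → ℝ) {C : ℝ}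
    (hD : ∀ j, |D j| ≤ C) :
    |∑ j, D j * (b j - β j)| ≤ Fintype.card ι * C * ‖b - β‖ := by
  have hcoord (j : ι) : |b j - β j| ≤ ‖b - β‖ := by
    simpa only [Real.norm_eq_abs, Pi.sub_apply] using norm_le_pi_norm (b - β) j
  calc |∑ j, D j * (b j - β j)|
      ≤ ∑ j, |D j| * |b j - β j| := by
        simpa only [abs_mul] using abs_sum_le_sum_abs (fun j => D j * (b j - β j)) univ
    _ ≤ ∑ _j : ι, C * ‖b - β‖ :=
        sum_le_sum fun j _ => mul_le_mul (hD j) (hcoord j) (abs_nonneg _)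
          ((abs_nonneg _).trans (hD j))
    _ = Fintype.card ι * C * ‖b - β‖ := by
        rw [sum_const, card_univ, nsmul_eq_mul, mul_assoc]

lemma le_sqrt_mul_of_le_div_sqrt {δ M A w : ℝ} {n : ℕ} (hδ : 0 < δ) (hM : 0 < M) (hn : 0 < n)
    (hA : A ≤ δ / M * n * w) (h : δ ≤ A / Real.sqrt n) : M ≤ Real.sqrt n * w := by
  have hs : 0 < Real.sqrt n := Real.sqrt_pos.2 (Nat.cast_pos.2 hn)
  have hss : Real.sqrt n * Real.sqrt n = n := Real.mul_self_sqrt n.cast_nonneg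
  rw [le_div_iff₀ hs] at h
  have key : δ * Real.sqrt n * M ≤ δ * Real.sqrt n * (Real.sqrt n * w) :=
    calc δ * Real.sqrt n * M ≤ A * M := by gcongr
      _ ≤ δ / M * n * w * M := by gcongr
      _ = δ * n * w := by field_simp
      _ = δ * Real.sqrt n * (Real.sqrt n * w) := by linear_combination (-(δ * w)) * hss
  exact le_of_mul_le_mul_left key (mul_pos hδ hs)

lemma tendsto_measure_zero_of_eventually_subset {Ω : Type*} [MeasurableSpace Ω] (P : Measure Ω)
    (f : ℕ → Ω → ℝ)
    (hf : ∀ η : ℝ, 0 < η → ∃ M : ℝ, 0 < M ∧ ∀ n, P {ω | M ≤ f n ω} ≤ ENNReal.ofReal η)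
    (A : ℕ → Set Ω) (hA : ∀ M : ℝ, 0 < M → ∀ᶠ n in atTop, A n ⊆ {ω | M ≤ f n ω}) :
    Tendsto (fun n => P (A n)) atTop (nhds 0) := by
  rw [ENNReal.tendsto_nhds_zero]
  intro E hE
  obtain ⟨η, -, hη, hηE⟩ := ENNReal.lt_iff_exists_real_btwn.1 hE
  obtain ⟨M, hM, hMη⟩ := hf η (ENNReal.ofReal_pos.1 hη)
  filter_upwards [hA M hM] with n hn
  exact ((measure_mono hn).trans (hMη n)).trans hηE.le

theorem cusum_regression_reduction_general
    {Ω : Type*} [MeasurableSpace Ω] (P : Measure Ω)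
    {K : ℕ} (x : ℕ → Fin (K + 1) → ℝ) (β : Fin (K + 1) → ℝ)
    (ε : ℕ → Ω → ℝ)
    (y : ℕ → Ω → ℝ) (hy : ∀ t ω, y t ω = (∑ j, x t j * β j) + ε t ω)
    (hconst : ∀ t, x t 0 = 1)
    (hcesaro : ∀ r ∈ Set.Icc (0 : ℝ) 1, ∀ i : Fin (K + 1),
      Tendsto (fun n : ℕ => (∑ t ∈ Finset.range ⌊(n : ℝ) * r⌋₊, x t i) / (n : ℝ))
        atTop (nhds (if i = 0 then r else 0)))
    (βhat : ℕ → Ω → Fin (K + 1) → ℝ)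
    (hOLS : ∀ n ω i, ∑ t ∈ Finset.range n,
      x t i * (y t ω - ∑ j, x t j * βhat n ω j) = 0)
    (hOp : ∀ η : ℝ, 0 < η → ∃ M : ℝ, 0 < M ∧ ∀ n : ℕ,
      P {ω | M ≤ Real.sqrt n * ‖βhat n ω - β‖} ≤ ENNReal.ofReal η) :
    ∀ δ : ℝ, 0 < δ →
      Tendsto (fun n : ℕ =>
          P {ω | ∃ r ∈ Set.Icc (0 : ℝ) 1, δ ≤
            |((∑ t ∈ Finset.range ⌊(n : ℝ) * r⌋₊,
                  ∑ j, x t j * (βhat n ω j - β j))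
                - r * ∑ t ∈ Finset.range n, ε t ω)| / Real.sqrt n})
        atTop (nhds 0) := by
  intro δ hδ
  refine tendsto_measure_zero_of_eventually_subset P _ hOp _ fun M hM => ?_
  have hdev (j : Fin (K + 1)) : ∀ᶠ n : ℕ in atTop, ∀ r ∈ Set.Icc (0 : ℝ) 1,
      |cusumDeviation (x · j) n r| ≤ δ / (M * (K + 1)) * n :=
    eventually_forall_abs_cusumDeviation_le _
      (by simpa only [mul_one, Nat.floor_natCast] using hcesaro 1 ⟨zero_le_one, le_rfl⟩ j)
      (by positivity)
  filter_upwards [eventually_all.2 hdev, eventually_gt_atTop 0] with n hn hn0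
  rintro ω ⟨r, hr, hδr⟩
  rw [sum_innovation_eq_sum_fitted_error x hconst (hy · ω) (hOLS n ω 0),
    cusum_fitted_error_sub_eq_sum_cusumDeviation] at hδr
  refine le_sqrt_mul_of_le_div_sqrt hδ hM hn0 ?_ hδr
  calc _ ≤ (K + 1 : ℕ) * (δ / (M * (K + 1)) * n) * ‖βhat n ω - β‖ := by
        simpa only [Fintype.card_fin] using
          abs_sum_mul_sub_le_card_mul _ _ _ fun j => hn j r hr
    _ = δ / M * n * ‖βhat n ω - β‖ := by
        push_cast
        field_simp

/-- Asymptotic reduction of the CUSUM of fitted values to the CUSUM of innovations: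
in the linear regression `y_t = x_t'β + ε_t` with intercept, Cesàro-negligible
non-constant regressors, `(1/n) Σ x_t x_t' → Q` block-diagonal invertible, OLS
estimator `β̂_n` with `√n(β̂_n − β) = O_p(1)`, one has uniformly in `r ∈ [0,1]`
`(1/√n) Σ_{t≤⌊nr⌋} x_t'(β̂_n − β) = (r/√n) Σ_{t≤n} ε_t + o_p(1)`. -/
theorem cusum_regression_reduction
    {Ω : Type*} [MeasurableSpace Ω] (P : Measure Ω) [IsProbabilityMeasure P]
    {K : ℕ} (x : ℕ → Fin (K + 1) → ℝ) (β : Fin (K + 1) → ℝ)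
    (ε : ℕ → Ω → ℝ) (σ : ℝ) (hσ : 0 < σ)
    (y : ℕ → Ω → ℝ) (hy : ∀ t ω, y t ω = (∑ j, x t j * β j) + ε t ω)
    (hconst : ∀ t, x t 0 = 1)
    (hmeas : ∀ t, Measurable (ε t))
    (hindep : iIndepFun ε P)
    (hident : ∀ t, P.map (ε t) = P.map (ε 0))
    (hint : Integrable (ε 0) P) (hmean : ∫ ω, ε 0 ω ∂P = 0)
    (hvar : ∫ ω, (ε 0 ω) ^ 2 ∂P = σ ^ 2)
    (hcesaro : ∀ r ∈ Set.Icc (0 : ℝ) 1, ∀ i : Fin (K + 1),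
      Tendsto (fun n : ℕ => (∑ t ∈ Finset.range ⌊(n : ℝ) * r⌋₊, x t i) / (n : ℝ))
        atTop (nhds (if i = 0 then r else 0)))
    (Q : Matrix (Fin (K + 1)) (Fin (K + 1)) ℝ)
    (hQinv : IsUnit Q.det)
    (hQblock : ∀ i : Fin (K + 1), i ≠ 0 → Q 0 i = 0 ∧ Q i 0 = 0)
    (hQlim : ∀ i j : Fin (K + 1),
      Tendsto (fun n : ℕ => (∑ t ∈ Finset.range n, x t i * x t j) / (n : ℝ))
        atTop (nhds (Q i j)))
    (βhat : ℕ → Ω → Fin (K + 1) → ℝ)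
    (hOLS : ∀ n ω i, ∑ t ∈ Finset.range n,
      x t i * (y t ω - ∑ j, x t j * βhat n ω j) = 0)
    (hOp : ∀ η : ℝ, 0 < η → ∃ M : ℝ, 0 < M ∧ ∀ n : ℕ,
      P {ω | M ≤ Real.sqrt n * ‖βhat n ω - β‖} ≤ ENNReal.ofReal η) :
    ∀ δ : ℝ, 0 < δ →
      Tendsto (fun n : ℕ =>
          P {ω | ∃ r ∈ Set.Icc (0 : ℝ) 1, δ ≤
            |((∑ t ∈ Finset.range ⌊(n : ℝ) * r⌋₊,
                  ∑ j, x t j * (βhat n ω j - β j))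
                - r * ∑ t ∈ Finset.range n, ε t ω)| / Real.sqrt n})
        atTop (nhds 0) :=
  cusum_regression_reduction_general P x β ε y hy hconst hcesaro βhat hOLS hOp
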